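/- Let S = sgp^+⟨A|R⟩ be a semigroup presented by a finite alphabet A and relations R, let L ⊆ A^+, and suppose (A, L) is a prefix-automatic structure for S. Let e be a new symbol not in A, B = A ∪ {e}, K = L ∪ {e}, and let S^1 be the monoid obtained from S by adjoining an identity element, with e mapped to the identity and each a ∈ A mapped to its image in S. Then (B, K) is a prefix-automatic structure for S^1. -/

import Mathlib

/-!  Common definitions, following the conventions of the paper
"Automaticity of one-relator semigroups with length less than or equal to three".

Words over an alphabet `α` are modelled as `List α`; the empty word is `[]`.
The padded alphabet `A(2,$)` is modelled inside `Option α × Option α`,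
where `none` plays the role of the padding symbol `$` (the pair `(none, none)`
never occurs in a padded convolution). -/

/-- A regular set of words: one accepted by a DFA with finitely many states. -/
abbrev IsReg {α : Type*} (L : Set (List α)) : Prop :=
  Language.IsRegular (L : Language α)

/-- Right-padded convolution `(x,y)δᴿ`: align the two words letter by letter
from the left and pad the shorter one on the right with the padding symbol. -/
def padR {α : Type*} (x y : List α) : List (Option α × Option α) :=
  (x.map some ++ List.replicate (y.length - x.length) none).zip
    (y.map some ++ List.replicate (x.length - y.length) none)

/-- Left-padded convolution `(x,y)δᴸ`: align the two words letter by letter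
from the right and pad the shorter one on the left with the padding symbol. -/
def padL {α : Type*} (x y : List α) : List (Option α × Option α) :=
  (List.replicate (y.length - x.length) none ++ x.map some).zip
    (List.replicate (x.length - y.length) none ++ y.map some)

/-- One elementary rewriting step: replace a factor `u` by `v`
for some defining relation `(u, v) ∈ R` (in either direction via `Relation.EqvGen`). -/
def OneStep {α : Type*} (R : Set (List α × List α)) (x y : List α) : Prop :=
  ∃ p u v s, (u, v) ∈ R ∧ x = p ++ u ++ s ∧ y = p ++ v ++ s

/-- Equality of two words in the semigroup `sgp⁺⟨α ∣ R⟩` (resp. the monoid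
`sgp⟨α ∣ R⟩`): the congruence on words generated by the relations `R`. -/
def WordEq {α : Type*} (R : Set (List α × List α)) : List α → List α → Prop :=
  Relation.EqvGen (OneStep R)

/-- Expansion of a word over an abstract generating set `β` into a word over the
presentation alphabet `α`, where `g b` is a word representing the generator `b`. -/
def expandW {α β : Type*} (g : β → List α) (w : List β) : List α :=
  (w.map g).flatten

/-- `(g, L)` is an automatic structure for the semigroup `sgp⁺⟨α ∣ R⟩` with
respect to the finite generating set indexed by `β`:  each generator `b` is the
element of the semigroup represented by the nonempty word `g b`, the language
`L ⊆ β⁺` is regular and maps onto the semigroup, and `L_ε^$` together with all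
`L_b^$` (right multiplication, right padding) are regular. -/
structure SgpAutoStruct {α β : Type*} (R : Set (List α × List α))
    (g : β → List α) (L : Set (List β)) : Prop where
  gen_ne : ∀ b, g b ≠ []
  reg : IsReg L
  ne : ∀ w ∈ L, w ≠ []
  onto : ∀ w : List α, w ≠ [] → ∃ x ∈ L, WordEq R (expandW g x) w
  eq_reg : IsReg {p | ∃ x ∈ L, ∃ y ∈ L,
      WordEq R (expandW g x) (expandW g y) ∧ p = padR x y}
  mul_reg : ∀ b : β, IsReg {p | ∃ x ∈ L, ∃ y ∈ L,
      WordEq R (expandW g x ++ g b) (expandW g y) ∧ p = padR x y}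

/-- A prefix-automatic structure for `sgp⁺⟨α ∣ R⟩`: an automatic structure for
which moreover `L'_= = {(x,y)δᴿ : x ∈ L, y ∈ Pref(L), x = y in S}` is regular. -/
structure SgpPrefixAutoStruct {α β : Type*} (R : Set (List α × List α))
    (g : β → List α) (L : Set (List β)) extends SgpAutoStruct R g L : Prop where
  pre_reg : IsReg {p | ∃ x ∈ L, ∃ y : List β, (∃ z ∈ L, y <+: z) ∧
      WordEq R (expandW g x) (expandW g y) ∧ p = padR x y}

/-- A biautomatic structure for the semigroup `sgp⁺⟨α ∣ R⟩`: the languages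
`L_b^$`, `_bL^$`, `^$L_b` and `_b^$L` are regular for every `b ∈ β ∪ {ε}`. -/
structure SgpBiautoStruct {α β : Type*} (R : Set (List α × List α))
    (g : β → List α) (L : Set (List β)) : Prop where
  gen_ne : ∀ b, g b ≠ []
  reg : IsReg L
  ne : ∀ w ∈ L, w ≠ []
  onto : ∀ w : List α, w ≠ [] → ∃ x ∈ L, WordEq R (expandW g x) w
  eqR_reg : IsReg {p | ∃ x ∈ L, ∃ y ∈ L,
      WordEq R (expandW g x) (expandW g y) ∧ p = padR x y}
  eqL_reg : IsReg {p | ∃ x ∈ L, ∃ y ∈ L,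
      WordEq R (expandW g x) (expandW g y) ∧ p = padL x y}
  mulRR_reg : ∀ b : β, IsReg {p | ∃ x ∈ L, ∃ y ∈ L,
      WordEq R (expandW g x ++ g b) (expandW g y) ∧ p = padR x y}
  mulLR_reg : ∀ b : β, IsReg {p | ∃ x ∈ L, ∃ y ∈ L,
      WordEq R (g b ++ expandW g x) (expandW g y) ∧ p = padR x y}
  mulRL_reg : ∀ b : β, IsReg {p | ∃ x ∈ L, ∃ y ∈ L,
      WordEq R (expandW g x ++ g b) (expandW g y) ∧ p = padL x y}
  mulLL_reg : ∀ b : β, IsReg {p | ∃ x ∈ L, ∃ y ∈ L,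
      WordEq R (g b ++ expandW g x) (expandW g y) ∧ p = padL x y}

/-- The semigroup `sgp⁺⟨α ∣ R⟩` is automatic: it admits an automatic structure
over some finite generating set. -/
def SgpAutomatic {α : Type*} (R : Set (List α × List α)) : Prop :=
  ∃ (β : Type) (_ : Fintype β) (g : β → List α) (L : Set (List β)),
    SgpAutoStruct R g L

/-- The semigroup `sgp⁺⟨α ∣ R⟩` is prefix-automatic. -/
def SgpPrefixAutomatic {α : Type*} (R : Set (List α × List α)) : Prop :=
  ∃ (β : Type) (_ : Fintype β) (g : β → List α) (L : Set (List β)),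
    SgpPrefixAutoStruct R g L

/-- The semigroup `sgp⁺⟨α ∣ R⟩` is biautomatic. -/
def SgpBiautomatic {α : Type*} (R : Set (List α × List α)) : Prop :=
  ∃ (β : Type) (_ : Fintype β) (g : β → List α) (L : Set (List β)),
    SgpBiautoStruct R g L

/-- `(g, L)` is an automatic structure for the monoid `sgp⟨α ∣ R⟩` with respect
to a finite generating set indexed by `β`; generators may represent any element
of the monoid (in particular the identity, represented by the empty word). -/
structure MonAutoStruct {α β : Type*} (R : Set (List α × List α))
    (g : β → List α) (L : Set (List β)) : Prop where
  reg : IsReg L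
  ne : ∀ w ∈ L, w ≠ []
  onto : ∀ w : List α, ∃ x ∈ L, WordEq R (expandW g x) w
  eq_reg : IsReg {p | ∃ x ∈ L, ∃ y ∈ L,
      WordEq R (expandW g x) (expandW g y) ∧ p = padR x y}
  mul_reg : ∀ b : β, IsReg {p | ∃ x ∈ L, ∃ y ∈ L,
      WordEq R (expandW g x ++ g b) (expandW g y) ∧ p = padR x y}

/-- A prefix-automatic structure for the monoid `sgp⟨α ∣ R⟩`. -/
structure MonPrefixAutoStruct {α β : Type*} (R : Set (List α × List α))
    (g : β → List α) (L : Set (List β)) extends MonAutoStruct R g L : Prop where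
  pre_reg : IsReg {p | ∃ x ∈ L, ∃ y : List β, (∃ z ∈ L, y <+: z) ∧
      WordEq R (expandW g x) (expandW g y) ∧ p = padR x y}

/-- A biautomatic structure for the monoid `sgp⟨α ∣ R⟩`. -/
structure MonBiautoStruct {α β : Type*} (R : Set (List α × List α))
    (g : β → List α) (L : Set (List β)) : Prop where
  reg : IsReg L
  ne : ∀ w ∈ L, w ≠ []
  onto : ∀ w : List α, ∃ x ∈ L, WordEq R (expandW g x) w
  eqR_reg : IsReg {p | ∃ x ∈ L, ∃ y ∈ L,
      WordEq R (expandW g x) (expandW g y) ∧ p = padR x y}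
  eqL_reg : IsReg {p | ∃ x ∈ L, ∃ y ∈ L,
      WordEq R (expandW g x) (expandW g y) ∧ p = padL x y}
  mulRR_reg : ∀ b : β, IsReg {p | ∃ x ∈ L, ∃ y ∈ L,
      WordEq R (expandW g x ++ g b) (expandW g y) ∧ p = padR x y}
  mulLR_reg : ∀ b : β, IsReg {p | ∃ x ∈ L, ∃ y ∈ L,
      WordEq R (g b ++ expandW g x) (expandW g y) ∧ p = padR x y}
  mulRL_reg : ∀ b : β, IsReg {p | ∃ x ∈ L, ∃ y ∈ L,
      WordEq R (expandW g x ++ g b) (expandW g y) ∧ p = padL x y}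
  mulLL_reg : ∀ b : β, IsReg {p | ∃ x ∈ L, ∃ y ∈ L,
      WordEq R (g b ++ expandW g x) (expandW g y) ∧ p = padL x y}

/-- The monoid `sgp⟨α ∣ R⟩` is automatic. -/
def MonAutomatic {α : Type*} (R : Set (List α × List α)) : Prop :=
  ∃ (β : Type) (_ : Fintype β) (g : β → List α) (L : Set (List β)),
    MonAutoStruct R g L

/-- The monoid `sgp⟨α ∣ R⟩` is prefix-automatic. -/
def MonPrefixAutomatic {α : Type*} (R : Set (List α × List α)) : Prop :=
  ∃ (β : Type) (_ : Fintype β) (g : β → List α) (L : Set (List β)),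
    MonPrefixAutoStruct R g L

/-- The monoid `sgp⟨α ∣ R⟩` is biautomatic. -/
def MonBiautomatic {α : Type*} (R : Set (List α × List α)) : Prop :=
  ∃ (β : Type) (_ : Fintype β) (g : β → List α) (L : Set (List β)),
    MonBiautoStruct R g L

/-- The defining relations of `S¹ = sgp⁺⟨α, e ∣ R, ea = ae = a, ee = e⟩`,
the monoid obtained from `S = sgp⁺⟨α ∣ R⟩` by adjoining an identity element,
presented as a semigroup over the alphabet `Option α` where `none` is the new
identity letter `e`. -/
def adjoinOne {α : Type*} (R : Set (List α × List α)) :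
    Set (List (Option α) × List (Option α)) :=
  {q | ∃ p ∈ R, q = (p.1.map some, p.2.map some)} ∪
    {q | ∃ a : α, q = ([none, some a], [some a])} ∪
    {q | ∃ a : α, q = ([some a, none], [some a])} ∪
    {([none, none], [none])}

/-! Write `π` for the map erasing the identity letter `e`. Every nonempty word `w` over `α ∪ {e}`
equals `e · π(w)` in `S¹`, and erasing `e` sends each defining relation of `S¹` to an equality
in `S`; so two nonempty words are equal in `S¹` exactly when their images under `π` are equal
in `S`. Since the relations of `S` have nonempty sides, no word of `L` equals `e` in `S¹`.
Each language of `(α ∪ {e}, L ∪ {e})` is therefore the matching language of `(α, L)`, transported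
along an injective renaming of letters, plus the pair `(e, e)` or, for right multiplication by
`a ∈ α`, the words `(e, v)δᴿ` with `v ∈ L` and `v = a` in `S`. The latter form the image under
`v ↦ (e, v)δᴿ` of `{v : (x₀, v)δᴿ ∈ L_ε^$}` for a fixed `x₀ ∈ L` representing `a`. Regularity is
preserved by all these operations because each keeps the family of derivatives (left quotients)
finite (Myhill–Nerode). -/

section PaddedConvolution

variable {γ δ : Type*}

theorem padR_of_ne_nil {x y : List γ} (h : x ≠ [] ∨ y ≠ []) :
    padR x y = (x.head?, y.head?) :: padR x.tail y.tail := by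
  rcases x with _ | ⟨c, x⟩ <;> rcases y with _ | ⟨d, y⟩
  · simp at h
  all_goals simp [padR, List.replicate_succ]

theorem padR_cons_right (x : List γ) (d : γ) (y : List γ) :
    padR x (d :: y) = (x.head?, some d) :: padR x.tail y :=
  padR_of_ne_nil (.inr (List.cons_ne_nil d y))

theorem padR_map (f : γ → δ) (x y : List γ) :
    padR (x.map f) (y.map f) = (padR x y).map (Prod.map (Option.map f) (Option.map f)) := by
  rw [padR, padR, ← List.zip_map]
  simp [List.map_replicate]

@[simp] theorem List.reduceOption_map_some (x : List γ) : (x.map some).reduceOption = x := by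
  simp [List.reduceOption, List.filterMap_map]

theorem padR_injective {x y x' y' : List γ} (h : padR x y = padR x' y') : x = x' ∧ y = y' := by
  have fst (x y : List γ) : ((padR x y).map Prod.fst).reduceOption = x := by
    rw [padR, List.map_fst_zip (by simp; omega)]
    simp [List.reduceOption_append, List.reduceOption_replicate_none]
  have snd (x y : List γ) : ((padR x y).map Prod.snd).reduceOption = y := by
    rw [padR, List.map_snd_zip (by simp; omega)]
    simp [List.reduceOption_append, List.reduceOption_replicate_none]
  exact ⟨by rw [← fst x y, h, fst], by rw [← snd x y, h, snd]⟩

end PaddedConvolution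

section RegularClosure

variable {γ δ : Type*}

theorem finite_setOf_suffix (w : List γ) : {t | t <:+ w}.Finite :=
  w.tails.finite_toSet.subset fun t ht => (List.mem_tails t w).mpr ht

theorem IsReg.finite_range_leftQuotient {M : Set (List γ)} (h : IsReg M) :
    (Set.range fun x : List γ => {y | x ++ y ∈ M}).Finite :=
  Language.IsRegular.finite_range_leftQuotient h

theorem leftQuotient_cons_mem_range (M : Set (List γ)) (x : List γ) (a : γ) :
    {y | a :: y ∈ {y | x ++ y ∈ M}} ∈ Set.range fun x : List γ => {y | x ++ y ∈ M} :=
  ⟨x ++ [a], by simp⟩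

theorem isReg_of_derivative_mem {L : Set (List γ)} (𝓕 : Set (Set (List γ))) (h𝓕 : 𝓕.Finite)
    (hL : L ∈ 𝓕) (hstep : ∀ K ∈ 𝓕, ∀ a, {y | a :: y ∈ K} ∈ 𝓕) : IsReg L := by
  refine Language.IsRegular.of_finite_range_leftQuotient (h𝓕.subset ?_)
  rintro _ ⟨x, rfl⟩
  induction x generalizing L with
  | nil => exact hL
  | cons a x ih => exact ih (hstep L hL a)

theorem isReg_singleton (w : List γ) : IsReg ({w} : Set (List γ)) := by
  refine isReg_of_derivative_mem (insert ∅ ((fun t => {t}) '' {t | t <:+ w}))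
    ((finite_setOf_suffix w).image _ |>.insert _) (.inr ⟨w, List.suffix_refl w, rfl⟩) ?_
  rintro _ (rfl | ⟨_ | ⟨b, t⟩, ht, rfl⟩) a
  · exact .inl (by simp)
  · exact .inl (by simp)
  · by_cases hab : a = b
    · subst hab
      exact .inr ⟨t, (List.suffix_cons a t).trans ht, by simp⟩
    · exact .inl (by simp [hab])

theorem IsReg.union {L M : Set (List γ)} (hL : IsReg L) (hM : IsReg M) : IsReg (L ∪ M) :=
  Language.IsRegular.add hL hM

theorem IsReg.image_map {f : γ → δ} (hf : Function.Injective f) {M : Set (List γ)}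
    (h : IsReg M) : IsReg (List.map f '' M) := by
  refine isReg_of_derivative_mem
    (insert ∅ ((List.map f '' ·) '' Set.range fun x => {y | x ++ y ∈ M}))
    (h.finite_range_leftQuotient.image _ |>.insert _) (.inr ⟨M, ⟨[], rfl⟩, rfl⟩) ?_
  rintro _ (rfl | ⟨_, ⟨x, rfl⟩, rfl⟩) b
  · exact .inl (by simp)
  · by_cases hb : ∃ a, f a = b
    · obtain ⟨a, rfl⟩ := hb
      refine .inr ⟨_, leftQuotient_cons_mem_range M x a, Set.ext fun y => ?_⟩
      constructor
      · rintro ⟨u, hu, rfl⟩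
        exact ⟨a :: u, hu, rfl⟩
      · rintro ⟨_ | ⟨a', u⟩, hu, hy⟩
        · simp at hy
        · obtain ⟨ha, rfl⟩ := List.cons_eq_cons.mp hy
          obtain rfl := hf ha
          exact ⟨u, hu, rfl⟩
    · refine .inl (Set.eq_empty_of_forall_notMem fun y ⟨u, _, hu⟩ => hb ?_)
      cases u with
      | nil => simp at hu
      | cons a u => exact ⟨a, (List.cons_eq_cons.mp hu).1⟩

theorem IsReg.preimage_padR (x₀ : List γ) {P : Set (List (Option γ × Option γ))} (h : IsReg P) :
    IsReg (padR x₀ ⁻¹' P) := by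
  refine isReg_of_derivative_mem
    (Set.image2 (fun t Q => padR t ⁻¹' Q) {t | t <:+ x₀} (Set.range fun x => {y | x ++ y ∈ P}))
    ((finite_setOf_suffix x₀).image2 _ h.finite_range_leftQuotient)
    ⟨x₀, List.suffix_refl x₀, P, ⟨[], rfl⟩, rfl⟩ ?_
  rintro _ ⟨t, ht, _, ⟨x, rfl⟩, rfl⟩ c
  refine ⟨t.tail, (List.tail_suffix t).trans ht, _,
    leftQuotient_cons_mem_range P x (t.head?, some c), ?_⟩
  ext z
  simp [padR_cons_right]

theorem cons_mem_image_padR {t : List γ} {Q : Set (List γ)} {p q : Option γ}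
    {w : List (Option γ × Option γ)} :
    (p, q) :: w ∈ padR t '' Q ↔ p = t.head? ∧
      ((∃ d, q = some d ∧ w ∈ padR t.tail '' {y | d :: y ∈ Q}) ∨
        (q = none ∧ t ≠ [] ∧ [] ∈ Q ∧ w = padR t.tail [])) := by
  constructor
  · rintro ⟨_ | ⟨d, y⟩, hy, he⟩
    · rcases t with _ | ⟨c, t⟩
      · simp [padR] at he
      · rw [padR_of_ne_nil (.inl (List.cons_ne_nil c t))] at he
        simp only [List.cons.injEq, Prod.mk.injEq] at he
        obtain ⟨⟨rfl, rfl⟩, rfl⟩ := he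
        exact ⟨rfl, .inr ⟨rfl, List.cons_ne_nil c t, hy, rfl⟩⟩
    · rw [padR_cons_right] at he
      simp only [List.cons.injEq, Prod.mk.injEq] at he
      obtain ⟨⟨rfl, rfl⟩, rfl⟩ := he
      exact ⟨rfl, .inl ⟨d, rfl, y, hy, rfl⟩⟩
  · rintro ⟨rfl, ⟨d, rfl, y, hy, rfl⟩ | ⟨rfl, hp, hQ, rfl⟩⟩
    · exact ⟨d :: y, hy, padR_cons_right t d y⟩
    · exact ⟨[], hQ, padR_of_ne_nil (.inl hp)⟩

theorem IsReg.image_padR (x₀ : List γ) {M : Set (List γ)} (h : IsReg M) :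
    IsReg (padR x₀ '' M) := by
  set 𝓠 := insert {[]} (insert ∅ (Set.range fun x => {y | x ++ y ∈ M}))
  have h𝓠 : ∀ Q ∈ 𝓠, ∀ d, {y | d :: y ∈ Q} ∈ 𝓠 := by
    rintro _ (rfl | rfl | ⟨x, rfl⟩) d
    · exact .inr (.inl (by simp))
    · exact .inr (.inl (by simp))
    · exact .inr (.inr (leftQuotient_cons_mem_range M x d))
  refine isReg_of_derivative_mem (Set.image2 (fun t Q => padR t '' Q) {t | t <:+ x₀} 𝓠)
    ((finite_setOf_suffix x₀).image2 _ (h.finite_range_leftQuotient.insert _ |>.insert _))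
    ⟨x₀, List.suffix_refl x₀, M, .inr (.inr ⟨[], rfl⟩), rfl⟩ ?_
  rintro _ ⟨t, ht, Q, hQ, rfl⟩ ⟨p, q⟩
  have ht' : t.tail <:+ x₀ := (List.tail_suffix t).trans ht
  by_cases hp : p = t.head?
  · rcases q with _ | d
    · by_cases hQ' : t ≠ [] ∧ [] ∈ Q
      · refine ⟨t.tail, ht', {[]}, .inl rfl, Set.ext fun w => ?_⟩
        rw [Set.mem_ofPred_eq, cons_mem_image_padR]
        simp [hp, hQ']
      · refine ⟨t.tail, ht', ∅, .inr (.inl rfl), Set.ext fun w => ?_⟩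
        rw [Set.mem_ofPred_eq, cons_mem_image_padR]
        simp only [hp, true_and, reduceCtorEq, false_and, exists_false, false_or,
          Set.image_empty, Set.mem_empty_iff_false, false_iff]
        tauto
    · refine ⟨t.tail, ht', _, h𝓠 Q hQ d, Set.ext fun w => ?_⟩
      rw [Set.mem_ofPred_eq, cons_mem_image_padR]
      simp [hp]
  · refine ⟨t, ht, ∅, .inr (.inl rfl), Set.ext fun w => ?_⟩
    rw [Set.mem_ofPred_eq, cons_mem_image_padR]
    simp [hp]

end RegularClosure

section WordProblem

variable {α β : Type*} {R : Set (List α × List α)}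

theorem Relation.EqvGen.map {X Y : Type*} {r : X → X → Prop} {s : Y → Y → Prop} (f : X → Y)
    (hf : ∀ a b, r a b → Relation.EqvGen s (f a) (f b)) {x y : X} (h : Relation.EqvGen r x y) :
    Relation.EqvGen s (f x) (f y) := by
  induction h with
  | rel a b hab => exact hf a b hab
  | refl a => exact .refl _
  | symm a b _ ih => exact .symm _ _ ih
  | trans a b c _ _ ih₁ ih₂ => exact .trans _ _ _ ih₁ ih₂

theorem OneStep.of_mem {u v : List α} (h : (u, v) ∈ R) : OneStep R u v :=
  ⟨[], u, v, [], h, by simp, by simp⟩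

theorem WordEq.refl (x : List α) : WordEq R x x := Relation.EqvGen.refl x

theorem WordEq.symm {x y : List α} (h : WordEq R x y) : WordEq R y x :=
  Relation.EqvGen.symm _ _ h

theorem WordEq.trans {x y z : List α} (h₁ : WordEq R x y) (h₂ : WordEq R y z) :
    WordEq R x z :=
  Relation.EqvGen.trans _ _ _ h₁ h₂

theorem WordEq.of_mem {u v : List α} (h : (u, v) ∈ R) : WordEq R u v :=
  .rel _ _ (.of_mem h)

theorem WordEq.append_context {u v : List α} (h : WordEq R u v) (p s : List α) :
    WordEq R (p ++ u ++ s) (p ++ v ++ s) :=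
  h.map (fun w => p ++ w ++ s) fun _ _ ⟨p', u, v, s', hm, ha, hb⟩ =>
    Relation.EqvGen.rel _ _ ⟨p ++ p', u, v, s' ++ s, hm, by simp [ha], by simp [hb]⟩

theorem WordEq.map {R' : Set (List β × List β)} (f : List α → List β)
    (hf : ∀ x y, f (x ++ y) = f x ++ f y) (hR : ∀ q ∈ R, WordEq R' (f q.1) (f q.2))
    {x y : List α} (h : WordEq R x y) : WordEq R' (f x) (f y) :=
  Relation.EqvGen.map f (fun _ _ ⟨p, u, v, s, hm, ha, hb⟩ => by
    have h := (hR _ hm).append_context (f p) (f s)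
    rwa [← hf, ← hf, ← hf, ← hf, ← ha, ← hb] at h) h

theorem WordEq.eq_nil_iff (hR : ∀ q ∈ R, q.1 ≠ [] ∧ q.2 ≠ []) {x y : List α}
    (h : WordEq R x y) : x = [] ↔ y = [] := by
  induction h with
  | rel a b hab =>
    obtain ⟨p, u, v, s, hm, rfl, rfl⟩ := hab
    simp [(hR _ hm).1, (hR _ hm).2]
  | refl a => rfl
  | symm a b _ ih => exact ih.symm
  | trans a b c _ _ ih₁ ih₂ => exact ih₁.trans ih₂

theorem WordEq.nil_right_iff (hR : ∀ q ∈ R, q.1 ≠ [] ∧ q.2 ≠ []) {x : List α} :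
    WordEq R x [] ↔ x = [] :=
  ⟨fun h => (h.eq_nil_iff hR).mpr rfl, fun h => h ▸ WordEq.refl _⟩

theorem adjoinOne_nonempty (hR : ∀ q ∈ R, q.1 ≠ [] ∧ q.2 ≠ []) :
    ∀ q ∈ adjoinOne R, q.1 ≠ [] ∧ q.2 ≠ [] := by
  rintro _ (((⟨p, hp, rfl⟩ | ⟨a, rfl⟩) | ⟨a, rfl⟩) | rfl)
  · simpa using hR p hp
  all_goals simp

theorem map_some_mem_adjoinOne {u v : List α} (h : (u, v) ∈ R) :
    (u.map some, v.map some) ∈ adjoinOne R :=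
  Or.inl (Or.inl (Or.inl ⟨(u, v), h, rfl⟩))

theorem none_some_mem_adjoinOne (a : α) : ([none, some a], [some a]) ∈ adjoinOne R :=
  Or.inl (Or.inl (Or.inr ⟨a, rfl⟩))

theorem some_none_mem_adjoinOne (a : α) : ([some a, none], [some a]) ∈ adjoinOne R :=
  Or.inl (Or.inr ⟨a, rfl⟩)

theorem none_none_mem_adjoinOne : ([none, none], [none]) ∈ adjoinOne R :=
  Or.inr rfl

theorem WordEq.map_some {x y : List α} (h : WordEq R x y) :
    WordEq (adjoinOne R) (x.map some) (y.map some) :=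
  h.map _ (fun _ _ => List.map_append) fun _ hq =>
    WordEq.of_mem (map_some_mem_adjoinOne hq)

theorem WordEq.reduceOption {x y : List (Option α)} (h : WordEq (adjoinOne R) x y) :
    WordEq R x.reduceOption y.reduceOption := by
  refine h.map _ List.reduceOption_append ?_
  rintro q (((⟨p, hp, rfl⟩ | ⟨a, rfl⟩) | ⟨a, rfl⟩) | rfl)
  · simpa only [List.reduceOption_map_some] using WordEq.of_mem hp
  all_goals exact WordEq.refl _

theorem wordEq_none_cons_reduceOption :
    ∀ {x : List (Option α)}, x ≠ [] →
      WordEq (adjoinOne R) x (none :: x.reduceOption.map some)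
  | [none], _ => WordEq.refl _
  | [some a], _ => (WordEq.of_mem (none_some_mem_adjoinOne a)).symm
  | c :: d :: x, _ => by
    have ih := (wordEq_none_cons_reduceOption (List.cons_ne_nil d x)).append_context [c] []
    simp only [List.singleton_append, List.append_nil] at ih
    refine ih.trans ?_
    rcases c with _ | a
    · exact (WordEq.of_mem none_none_mem_adjoinOne).append_context [] _
    · exact ((WordEq.of_mem (some_none_mem_adjoinOne a)).append_context [] _).trans
        ((WordEq.of_mem (none_some_mem_adjoinOne a)).append_context [] _).symm

theorem wordEq_adjoinOne_iff {x y : List (Option α)} (hx : x ≠ []) (hy : y ≠ []) :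
    WordEq (adjoinOne R) x y ↔ WordEq R x.reduceOption y.reduceOption := by
  refine ⟨WordEq.reduceOption, fun h => ?_⟩
  have hmid := h.map_some.append_context [none] []
  simp only [List.singleton_append, List.append_nil] at hmid
  exact (wordEq_none_cons_reduceOption hx).trans
    (hmid.trans (wordEq_none_cons_reduceOption hy).symm)

theorem wordEq_append_none {x : List (Option α)} (hx : x ≠ []) :
    WordEq (adjoinOne R) (x ++ [none]) x :=
  (wordEq_adjoinOne_iff (by simp) hx).mpr (by simpa [List.reduceOption_append] using WordEq.refl _)

end WordProblem

section AdjoinIdentity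

variable {α β : Type*} {R : Set (List α × List α)} {L : Set (List α)}

theorem expandW_singleton (x : List β) : expandW (fun b => [b]) x = x := by
  rw [expandW, ← List.flatMap_def, List.flatMap_singleton']

def convLang (K K' : Set (List β)) (r : List β → List β → Prop) :
    Set (List (Option β × Option β)) :=
  {p | ∃ x ∈ K, ∃ y ∈ K', r x y ∧ p = padR x y}

def prefixes (K : Set (List β)) : Set (List β) := {y | ∃ z ∈ K, y <+: z}

/-- The language `K = L ∪ {e}` of the paper. -/
def adjoinOneLang (L : Set (List α)) : Set (List (Option α)) :=
  {w | ∃ l ∈ L, w = l.map some} ∪ {[none]}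

theorem preimage_padR_convLang {K K' : Set (List β)} {r : List β → List β → Prop} {x₀ : List β}
    (hx₀ : x₀ ∈ K) : padR x₀ ⁻¹' convLang K K' r = {y | y ∈ K' ∧ r x₀ y} := by
  ext y
  constructor
  · rintro ⟨x, -, y', hy', hr, he⟩
    obtain ⟨rfl, rfl⟩ := padR_injective he
    exact ⟨hy', hr⟩
  · rintro ⟨hy, hr⟩
    exact ⟨x₀, hx₀, y, hy, hr, rfl⟩

theorem convLang_congr {K K' : Set (List β)} {r r' : List β → List β → Prop}
    (h : ∀ x ∈ K, ∀ y ∈ K', r x y ↔ r' x y) : convLang K K' r = convLang K K' r' := by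
  ext p
  constructor <;> rintro ⟨x, hx, y, hy, hr, rfl⟩
  exacts [⟨x, hx, y, hy, (h x hx y hy).mp hr, rfl⟩, ⟨x, hx, y, hy, (h x hx y hy).mpr hr, rfl⟩]

theorem convLang_insert_nil {K K' : Set (List β)} {r : List β → List β → Prop}
    (h : ∀ x ∈ K, ¬ r x []) : convLang K (insert [] K') r = convLang K K' r := by
  ext p
  constructor
  · rintro ⟨x, hx, y, rfl | hy, hr, rfl⟩
    · exact absurd hr (h x hx)
    · exact ⟨x, hx, y, hy, hr, rfl⟩
  · rintro ⟨x, hx, y, hy, hr, rfl⟩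
    exact ⟨x, hx, y, .inr hy, hr, rfl⟩

theorem prodMap_optionMap_some_injective : Function.Injective
    (Prod.map (Option.map (some : α → Option α)) (Option.map (some : α → Option α))) :=
  (Option.map_injective (Option.some_injective α)).prodMap
    (Option.map_injective (Option.some_injective α))

theorem ne_nil_of_mem_adjoinOneLang (hL : ∀ w ∈ L, w ≠ []) {w : List (Option α)}
    (hw : w ∈ adjoinOneLang L) : w ≠ [] := by
  rcases hw with ⟨l, hl, rfl⟩ | rfl
  · simpa using hL l hl
  · simp

theorem isReg_adjoinOneLang (hL : IsReg L) : IsReg (adjoinOneLang L) := by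
  refine .union ?_ (isReg_singleton _)
  convert hL.image_map (Option.some_injective α) using 1
  ext w
  simp [eq_comm]

theorem prefixes_adjoinOneLang :
    prefixes (adjoinOneLang L) = insert [] (adjoinOneLang (prefixes L)) := by
  ext y
  simp only [prefixes, adjoinOneLang, Set.mem_insert_iff, Set.mem_union, Set.mem_ofPred_eq,
    Set.mem_singleton_iff]
  constructor
  · rintro ⟨z, ⟨l, hl, rfl⟩ | rfl, hyz⟩
    · obtain ⟨m, hm, rfl⟩ := List.prefix_map_iff.mp hyz
      exact .inr (.inl ⟨m, ⟨l, hl, hm⟩, rfl⟩)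
    · rcases List.prefix_cons_iff.mp hyz with rfl | ⟨t, rfl, ht⟩
      · exact .inl rfl
      · exact .inr (.inr (by simpa using ht))
  · rintro (rfl | ⟨m, ⟨l, hl, hm⟩, rfl⟩ | rfl)
    · exact ⟨[none], .inr rfl, List.nil_prefix⟩
    · exact ⟨l.map some, .inl ⟨l, hl, rfl⟩, hm.map some⟩
    · exact ⟨[none], .inr rfl, List.prefix_refl _⟩

theorem convLang_adjoinOneLang (hR : ∀ q ∈ R, q.1 ≠ [] ∧ q.2 ≠ []) (hL : ∀ w ∈ L, w ≠ [])
    (M : Set (List α)) :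
    convLang (adjoinOneLang L) (adjoinOneLang M) (WordEq (adjoinOne R)) =
      List.map (Prod.map (Option.map some) (Option.map some)) '' convLang L M (WordEq R) ∪
        {[(some none, some none)]} := by
  ext p
  constructor
  · rintro ⟨x, hx, y, hy, h, rfl⟩
    have hx' := ne_nil_of_mem_adjoinOneLang hL hx
    have hy' : y ≠ [] := (h.eq_nil_iff (adjoinOne_nonempty hR)).not.mp hx'
    rw [wordEq_adjoinOne_iff hx' hy'] at h
    rcases hx with ⟨u, hu, rfl⟩ | rfl <;> rcases hy with ⟨v, hv, rfl⟩ | rfl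
    · simp only [List.reduceOption_map_some] at h
      exact .inl ⟨padR u v, ⟨u, hu, v, hv, h, rfl⟩, (padR_map _ u v).symm⟩
    · simp [List.reduceOption_map_some, WordEq.nil_right_iff hR, hL u hu] at h
    · simp only [List.reduceOption_map_some, List.reduceOption_cons_of_none,
        List.reduceOption_nil] at h
      exact absurd ((WordEq.nil_right_iff hR).mp h.symm) (by simpa using hy')
    · exact .inr rfl
  · rintro (⟨_, ⟨u, hu, v, hv, h, rfl⟩, rfl⟩ | rfl)
    · exact ⟨u.map some, .inl ⟨u, hu, rfl⟩, v.map some, .inl ⟨v, hv, rfl⟩, h.map_some,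
        (padR_map _ u v).symm⟩
    · exact ⟨[none], .inr rfl, [none], .inr rfl, WordEq.refl _, rfl⟩

theorem convLang_adjoinOneLang_append_some (hR : ∀ q ∈ R, q.1 ≠ [] ∧ q.2 ≠ [])
    (hL : ∀ w ∈ L, w ≠ []) (a : α) :
    convLang (adjoinOneLang L) (adjoinOneLang L)
        (fun x y => WordEq (adjoinOne R) (x ++ [some a]) y) =
      List.map (Prod.map (Option.map some) (Option.map some)) ''
          convLang L L (fun x y => WordEq R (x ++ [a]) y) ∪
        padR [none] '' (List.map some '' {v | v ∈ L ∧ WordEq R [a] v}) := by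
  ext p
  constructor
  · rintro ⟨x, hx, y, hy, h, rfl⟩
    rw [wordEq_adjoinOne_iff (by simp) (ne_nil_of_mem_adjoinOneLang hL hy)] at h
    rcases hx with ⟨u, hu, rfl⟩ | rfl <;> rcases hy with ⟨v, hv, rfl⟩ | rfl <;>
      simp only [List.reduceOption_append, List.reduceOption_map_some,
        List.reduceOption_cons_of_none, List.reduceOption_cons_of_some, List.reduceOption_nil,
        List.nil_append, WordEq.nil_right_iff hR, List.append_eq_nil_iff, List.cons_ne_nil,
        and_false] at h
    · exact .inl ⟨padR u v, ⟨u, hu, v, hv, h, rfl⟩, (padR_map _ u v).symm⟩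
    · exact .inr ⟨v.map some, ⟨v, ⟨hv, h⟩, rfl⟩, rfl⟩
  · rintro (⟨_, ⟨u, hu, v, hv, h, rfl⟩, rfl⟩ | ⟨_, ⟨v, ⟨hv, h⟩, rfl⟩, rfl⟩)
    · refine ⟨u.map some, .inl ⟨u, hu, rfl⟩, v.map some, .inl ⟨v, hv, rfl⟩, ?_,
        (padR_map _ u v).symm⟩
      simpa only [List.map_append, List.map_cons, List.map_nil] using h.map_some
    · exact ⟨[none], .inr rfl, v.map some, .inl ⟨v, hv, rfl⟩,
        (WordEq.of_mem (none_some_mem_adjoinOne a)).trans h.map_some, rfl⟩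

theorem exists_mem_adjoinOneLang_wordEq (hL : ∀ w ∈ L, w ≠ [])
    (honto : ∀ w : List α, w ≠ [] → ∃ x ∈ L, WordEq R x w) {w : List (Option α)} (hw : w ≠ []) :
    ∃ x ∈ adjoinOneLang L, WordEq (adjoinOne R) x w := by
  by_cases hw' : w.reduceOption = []
  · refine ⟨[none], .inr rfl, (wordEq_adjoinOne_iff (List.cons_ne_nil _ _) hw).mpr ?_⟩
    rw [hw']
    exact WordEq.refl _
  · obtain ⟨x, hx, hxw⟩ := honto _ hw'
    refine ⟨x.map some, .inl ⟨x, hx, rfl⟩,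
      (wordEq_adjoinOne_iff (by simpa using hL x hx) hw).mpr ?_⟩
    rwa [List.reduceOption_map_some]

theorem isReg_convLang_adjoinOneLang (hR : ∀ q ∈ R, q.1 ≠ [] ∧ q.2 ≠ [])
    (hL : ∀ w ∈ L, w ≠ []) {M : Set (List α)} (h : IsReg (convLang L M (WordEq R))) :
    IsReg (convLang (adjoinOneLang L) (adjoinOneLang M) (WordEq (adjoinOne R))) := by
  rw [convLang_adjoinOneLang hR hL M]
  exact (h.image_map prodMap_optionMap_some_injective).union (isReg_singleton _)

theorem isReg_convLang_adjoinOneLang_append_none (hR : ∀ q ∈ R, q.1 ≠ [] ∧ q.2 ≠ [])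
    (hL : ∀ w ∈ L, w ≠ []) (h : IsReg (convLang L L (WordEq R))) :
    IsReg (convLang (adjoinOneLang L) (adjoinOneLang L)
      fun x y => WordEq (adjoinOne R) (x ++ [none]) y) := by
  have hx : ∀ x ∈ adjoinOneLang L, WordEq (adjoinOne R) (x ++ [none]) x := fun x hx =>
    wordEq_append_none (ne_nil_of_mem_adjoinOneLang hL hx)
  rw [convLang_congr fun x hx' y _ => ⟨(hx x hx').symm.trans, (hx x hx').trans⟩]
  exact isReg_convLang_adjoinOneLang hR hL h

theorem isReg_convLang_adjoinOneLang_append_some (hR : ∀ q ∈ R, q.1 ≠ [] ∧ q.2 ≠ [])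
    (hL : ∀ w ∈ L, w ≠ []) (h : IsReg (convLang L L (WordEq R))) {a : α}
    (ha : IsReg (convLang L L fun x y => WordEq R (x ++ [a]) y)) {x₀ : List α} (hx₀ : x₀ ∈ L)
    (hx₀a : WordEq R x₀ [a]) :
    IsReg (convLang (adjoinOneLang L) (adjoinOneLang L)
      fun x y => WordEq (adjoinOne R) (x ++ [some a]) y) := by
  have hrepr : {v | v ∈ L ∧ WordEq R [a] v} = padR x₀ ⁻¹' convLang L L (WordEq R) := by
    rw [preimage_padR_convLang hx₀]
    ext v
    exact and_congr_right fun _ => ⟨hx₀a.trans, hx₀a.symm.trans⟩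
  rw [convLang_adjoinOneLang_append_some hR hL, hrepr]
  exact (ha.image_map prodMap_optionMap_some_injective).union
    (((h.preimage_padR x₀).image_map (Option.some_injective α)).image_padR [none])

theorem isReg_convLang_adjoinOneLang_prefixes (hR : ∀ q ∈ R, q.1 ≠ [] ∧ q.2 ≠ [])
    (hL : ∀ w ∈ L, w ≠ []) (h : IsReg (convLang L (prefixes L) (WordEq R))) :
    IsReg (convLang (adjoinOneLang L) (prefixes (adjoinOneLang L)) (WordEq (adjoinOne R))) := by
  rw [prefixes_adjoinOneLang, convLang_insert_nil fun x hx => ?_]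
  · exact isReg_convLang_adjoinOneLang hR hL h
  · rw [WordEq.nil_right_iff (adjoinOne_nonempty hR)]
    exact ne_nil_of_mem_adjoinOneLang hL hx

end AdjoinIdentity

theorem statement_1_general {α : Type} (R : Set (List α × List α))
    (hR : ∀ q ∈ R, q.1 ≠ [] ∧ q.2 ≠ []) (L : Set (List α))
    (hL : SgpPrefixAutoStruct R (fun a => [a]) L) :
    SgpPrefixAutoStruct (adjoinOne R) (fun b => [b])
      ({w | ∃ l ∈ L, w = l.map some} ∪ {[(none : Option α)]}) := by
  have hE : IsReg (convLang L L (WordEq R)) := by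
    simpa only [convLang, expandW_singleton] using hL.eq_reg
  have hP : IsReg (convLang L (prefixes L) (WordEq R)) := by
    simpa only [convLang, prefixes, Set.mem_ofPred_eq, expandW_singleton] using hL.pre_reg
  refine ⟨⟨fun _ => List.cons_ne_nil _ _, isReg_adjoinOneLang hL.reg,
    fun _ => ne_nil_of_mem_adjoinOneLang hL.ne, ?_, ?_, ?_⟩, ?_⟩ <;>
    simp only [expandW_singleton]
  · exact fun _ =>
      exists_mem_adjoinOneLang_wordEq hL.ne (by simpa only [expandW_singleton] using hL.onto)
  · exact isReg_convLang_adjoinOneLang hR hL.ne hE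
  · rintro (_ | a)
    · exact isReg_convLang_adjoinOneLang_append_none hR hL.ne hE
    · obtain ⟨x₀, hx₀, hx₀a⟩ := hL.onto [a] (List.cons_ne_nil a [])
      rw [expandW_singleton] at hx₀a
      exact isReg_convLang_adjoinOneLang_append_some hR hL.ne hE
        (by simpa only [convLang, expandW_singleton] using hL.mul_reg a) hx₀ hx₀a
  · exact isReg_convLang_adjoinOneLang_prefixes hR hL.ne hP

/-- if `(α, L)` is a prefix-automatic structure for the semigroup
`S = sgp⁺⟨α ∣ R⟩`, then `(α ∪ {e}, L ∪ {e})` is a prefix-automatic structure for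
the monoid `S¹ = sgp⁺⟨α, e ∣ R, ea = ae = a, ee = e⟩` obtained by adjoining an
identity element `e` (modelled by the letter `none`). -/
theorem statement_1 {α : Type} [Fintype α] (R : Set (List α × List α))
    (hR : ∀ q ∈ R, q.1 ≠ [] ∧ q.2 ≠ []) (L : Set (List α))
    (hL : SgpPrefixAutoStruct R (fun a => [a]) L) :
    SgpPrefixAutoStruct (adjoinOne R) (fun b => [b])
      ({w | ∃ l ∈ L, w = l.map some} ∪ {[(none : Option α)]}) :=
  statement_1_general R hR L hL
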